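/- arXiv:1812.00508 — 7 statements merged into one kernel-verified Lean document; each statement's English description precedes it below -/
import Mathlib

section
/- For all reals u ≥ 0 and ξ ≥ 0, the supremum over all real t < 1/2 of the quantity u·t − ξ·t/(1 − 2t) equals (√u − √ξ)²/2. -/
open Real

/-! Substituting `s = 1 - 2t > 0` turns the objective into `((u + ξ) - (u s + ξ / s)) / 2`, so the
supremum is `((u + ξ) - 2 √u √ξ) / 2 = (√u - √ξ)² / 2` by AM-GM: `u s + ξ / s` has infimum
`2 √u √ξ` over `s > 0`, attained at `s = √ξ / √u` when `u, ξ > 0` and approached as `s → ∞`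
(if `u = 0`) or `s → 0` (if `ξ = 0`). -/

lemma two_mul_sqrt_mul_sqrt_le_mul_add_div {a b s : ℝ} (ha : 0 ≤ a) (hb : 0 ≤ b) (hs : 0 < s) :
    2 * √a * √b ≤ a * s + b / s := by
  have hgap : a * s + b / s - 2 * √a * √b = (√a * s - √b) ^ 2 / s := by
    field_simp
    linear_combination (-s ^ 2) * sq_sqrt ha - sq_sqrt hb
  have : 0 ≤ (√a * s - √b) ^ 2 / s := by positivity
  linarith

lemma exists_pos_mul_add_div_lt {a b c : ℝ} (ha : 0 ≤ a) (hb : 0 ≤ b) (hc : 2 * √a * √b < c) :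
    ∃ s > 0, a * s + b / s < c := by
  have hc₀ : 0 < c := lt_of_le_of_lt (by positivity) hc
  rcases ha.eq_or_lt with rfl | ha₀
  · refine ⟨b / c + 1, by positivity, ?_⟩
    rw [zero_mul, zero_add, div_lt_iff₀ (by positivity), mul_add, mul_div_cancel₀ b hc₀.ne']
    linarith
  rcases hb.eq_or_lt with rfl | hb₀
  · refine ⟨c / (2 * a), by positivity, ?_⟩
    have : a * (c / (2 * a)) = c / 2 := by field_simp
    rw [zero_div, add_zero, this]
    linarith
  · refine ⟨√b / √a, by positivity, ?_⟩
    have hsa := sqrt_pos.2 ha₀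
    have hsb := sqrt_pos.2 hb₀
    have : a * (√b / √a) + b / (√b / √a) = 2 * √a * √b := by
      field_simp
      rw [sq_sqrt ha, sq_sqrt hb]
      ring
    rwa [this]

lemma mul_sub_mul_div_one_sub_two_mul {u ξ t : ℝ} (ht : 1 - 2 * t ≠ 0) :
    u * t - ξ * t / (1 - 2 * t) = ((u + ξ) - (u * (1 - 2 * t) + ξ / (1 - 2 * t))) / 2 := by
  have hξ : ξ / (1 - 2 * t) = 2 * (ξ * t / (1 - 2 * t)) + ξ := by
    field_simp
    ring
  rw [hξ]
  ring

/-- Fenchel–Legendre transform of `t ↦ ξ t / (1 - 2 t)` (for `t < 1/2`):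
the rate function of the normalized Stage-1 signal statistic of OTSS. -/
theorem fenchel_legendre_noncentral_chi_squared (u ξ : ℝ) (hu : 0 ≤ u) (hξ : 0 ≤ ξ) :
    sSup {y : ℝ | ∃ t : ℝ, t < 1 / 2 ∧ y = u * t - ξ * t / (1 - 2 * t)}
      = (Real.sqrt u - Real.sqrt ξ) ^ 2 / 2 := by
  have hrate : (√u - √ξ) ^ 2 / 2 = ((u + ξ) - 2 * √u * √ξ) / 2 := by
    rw [sub_sq, sq_sqrt hu, sq_sqrt hξ]
    ring
  rw [hrate]
  refine csSup_eq_of_forall_le_of_forall_lt_exists_gt ⟨_, 0, by norm_num, rfl⟩ ?_ ?_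
  · rintro y ⟨t, ht, rfl⟩
    have hs : 0 < 1 - 2 * t := by linarith
    rw [mul_sub_mul_div_one_sub_two_mul hs.ne']
    have := two_mul_sqrt_mul_sqrt_le_mul_add_div hu hξ hs
    linarith
  · intro w hw
    obtain ⟨s, hs, hlt⟩ := exists_pos_mul_add_div_lt hu hξ (c := u + ξ - 2 * w) (by linarith)
    set t := (1 - s) / 2
    have hst : 1 - 2 * t = s := by ring
    refine ⟨u * t - ξ * t / (1 - 2 * t), ⟨t, by linarith, rfl⟩, ?_⟩
    rw [mul_sub_mul_div_one_sub_two_mul (hst ▸ hs.ne'), hst]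
    linarith
end

section
/- Let ξ ≥ 0 and β > 0 be reals. Then the set { (√u − √ξ)²/2 + β·v : u, v ∈ ℝ, 0 ≤ u ≤ v } has least element ξ·β/(1 + 2β), attained at u = v = ξ/(1 + 2β)². In particular, with β = (N−K)/2 for integers 1 ≤ K ≤ N−1, the infimum equals ξ/(2(1 + 1/(N−K))). -/
/-!
Put `t = √u` and `s = √ξ`. Completing the square,
`(t - s)² / 2 + β t² = s² β / (1 + 2β) + (1 + 2β) / 2 · (t - s / (1 + 2β))²`,
so on the diagonal `u = v` the objective is at least `ξ β / (1 + 2β)`, with equality at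
`t = s / (1 + 2β)`; off the diagonal, `β > 0` makes `β v ≥ β u`.
-/

open Real

lemma half_sq_sub_add_mul_sq_eq (t s β : ℝ) (hβ : 1 + 2 * β ≠ 0) :
    (t - s) ^ 2 / 2 + β * t ^ 2 =
      s ^ 2 * β / (1 + 2 * β) + (1 + 2 * β) / 2 * (t - s / (1 + 2 * β)) ^ 2 := by
  field_simp
  ring

lemma mul_div_one_add_two_mul_le_half_sq_sqrt_sub_add_mul {ξ β u : ℝ} (hξ : 0 ≤ ξ)
    (hβ : 0 < 1 + 2 * β) (hu : 0 ≤ u) :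
    ξ * β / (1 + 2 * β) ≤ (√u - √ξ) ^ 2 / 2 + β * u := by
  calc ξ * β / (1 + 2 * β) = √ξ ^ 2 * β / (1 + 2 * β) := by rw [sq_sqrt hξ]
    _ ≤ √ξ ^ 2 * β / (1 + 2 * β) + (1 + 2 * β) / 2 * (√u - √ξ / (1 + 2 * β)) ^ 2 :=
        le_add_of_nonneg_right (by positivity)
    _ = (√u - √ξ) ^ 2 / 2 + β * u := by
        rw [← half_sq_sub_add_mul_sq_eq _ _ _ hβ.ne', sq_sqrt hu]

lemma half_sq_sqrt_sub_add_mul_at_minimizer {ξ β : ℝ} (hξ : 0 ≤ ξ)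
    (hβ : 0 < 1 + 2 * β) :
    (√(ξ / (1 + 2 * β) ^ 2) - √ξ) ^ 2 / 2 + β * (ξ / (1 + 2 * β) ^ 2) =
      ξ * β / (1 + 2 * β) := by
  have hsqrt : √(ξ / (1 + 2 * β) ^ 2) = √ξ / (1 + 2 * β) := by
    rw [sqrt_div hξ, sqrt_sq hβ.le]
  calc _ = (√ξ / (1 + 2 * β) - √ξ) ^ 2 / 2 + β * (√ξ / (1 + 2 * β)) ^ 2 := by
        rw [hsqrt, div_pow, sq_sqrt hξ]
    _ = √ξ ^ 2 * β / (1 + 2 * β) := by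
        rw [half_sq_sub_add_mul_sq_eq _ _ _ hβ.ne', sub_self]
        ring
    _ = ξ * β / (1 + 2 * β) := by rw [sq_sqrt hξ]

lemma mul_half_div_one_add_two_mul_half {d : ℝ} (ξ : ℝ) (hd : 0 < d) :
    ξ * (d / 2) / (1 + 2 * (d / 2)) = ξ / (2 * (1 + 1 / d)) := by
  field_simp
  ring

/-- The constrained minimization giving the Stage-1 large-deviations decay rate
of OTSS: the infimum of `(√u - √ξ)² / 2 + β v` over `0 ≤ u ≤ v` equals
`ξ β / (1 + 2 β)`, attained at `u = v = ξ / (1 + 2 β)²`; with `β = (N - K)/2`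
the value is `ξ / (2 (1 + 1/(N - K)))`. -/
theorem stage1_rate_minimization (ξ β : ℝ) (hξ : 0 ≤ ξ) (hβ : 0 < β) :
    IsLeast {y : ℝ | ∃ u v : ℝ, 0 ≤ u ∧ u ≤ v ∧
        y = (Real.sqrt u - Real.sqrt ξ) ^ 2 / 2 + β * v} (ξ * β / (1 + 2 * β)) ∧
    ((Real.sqrt (ξ / (1 + 2 * β) ^ 2) - Real.sqrt ξ) ^ 2 / 2
        + β * (ξ / (1 + 2 * β) ^ 2) = ξ * β / (1 + 2 * β)) ∧
    (∀ N K : ℕ, 1 ≤ K → K ≤ N - 1 → β = ((N : ℝ) - K) / 2 →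
      ξ * β / (1 + 2 * β) = ξ / (2 * (1 + 1 / ((N : ℝ) - K)))) := by
  have hβ' : 0 < 1 + 2 * β := by linarith
  have hmin := half_sq_sqrt_sub_add_mul_at_minimizer hξ hβ'
  refine ⟨⟨⟨_, _, by positivity, le_rfl, hmin.symm⟩, ?_⟩, hmin, ?_⟩
  · rintro y ⟨u, v, hu, huv, rfl⟩
    calc ξ * β / (1 + 2 * β) ≤ (√u - √ξ) ^ 2 / 2 + β * u :=
          mul_div_one_add_two_mul_le_half_sq_sqrt_sub_add_mul hξ hβ' hu
      _ ≤ (√u - √ξ) ^ 2 / 2 + β * v := by gcongr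
  · rintro N K hK hKN rfl
    have hKN' : (K : ℝ) < N := by exact_mod_cast (by omega : K < N)
    exact mul_half_div_one_add_two_mul_half ξ (sub_pos.mpr hKN')
end

section
/- Let N ≥ 2 and 1 ≤ K ≤ N−1 be integers and define, for λ > 0, P(λ) = ((N−1)!/((K−1)!(N−1−K)!)) · Σ_{n=0}^{K−1} (−1)^n · C(K−1,n) / ((N−K+n)(N−K+n+1)) · exp(−λ(N−K+n)/(2(N−K+n+1))). Then −log P(λ) / λ converges, as λ → ∞, to (N−K)/(2(N−K+1)). -/
open Finset Real Filter

/-- Large-deviations decay rate of the closed-form Stage-1 misalignment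
probability of OTSS as the noncentrality parameter grows. -/
theorem stage1_decay_rate (N K : ℕ) (hN : 2 ≤ N) (hK1 : 1 ≤ K) (hKN : K ≤ N - 1) :
    Filter.Tendsto (fun lam : ℝ =>
        -Real.log (((N - 1).factorial : ℝ) /
            (((K - 1).factorial : ℝ) * ((N - 1 - K).factorial : ℝ)) *
          ∑ n ∈ Finset.range K, (-1 : ℝ) ^ n * ((K - 1).choose n : ℝ) /
            (((N : ℝ) - K + n) * ((N : ℝ) - K + n + 1)) *
            Real.exp (-(lam * ((N : ℝ) - K + n)) / (2 * ((N : ℝ) - K + n + 1)))) / lam)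
      Filter.atTop (nhds (((N : ℝ) - K) / (2 * ((N : ℝ) - K + 1)))) := by
  have hKN' : K + 1 ≤ N := by omega
  have hm : (1 : ℝ) ≤ (N : ℝ) - K := by
    have : ((K : ℝ) + 1) ≤ (N : ℝ) := by exact_mod_cast hKN'
    linarith
  set m : ℝ := (N : ℝ) - K with hm_def
  have hm0 : (0 : ℝ) < m := by linarith
  have hm1 : (0 : ℝ) < m + 1 := by linarith
  set C : ℝ := ((N - 1).factorial : ℝ) /
      (((K - 1).factorial : ℝ) * ((N - 1 - K).factorial : ℝ)) with hC_def
  have hC : 0 < C := by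
    apply div_pos
    · exact_mod_cast (N - 1).factorial_pos
    · have h1 : (0 : ℝ) < ((K - 1).factorial : ℝ) := by exact_mod_cast (K - 1).factorial_pos
      have h2 : (0 : ℝ) < ((N - 1 - K).factorial : ℝ) := by exact_mod_cast (N - 1 - K).factorial_pos
      exact mul_pos h1 h2
  set r0 : ℝ := m / (2 * (m + 1)) with hr0
  set f : ℝ → ℝ := fun lam => C *
      ∑ n ∈ Finset.range K, (-1 : ℝ) ^ n * ((K - 1).choose n : ℝ) /
        ((m + n) * (m + n + 1)) *
        Real.exp (-(lam * (m + n)) / (2 * (m + n + 1))) with hf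
  set g : ℝ → ℝ := fun lam => f lam * Real.exp (r0 * lam) with hg
  set L : ℝ := C * (1 / (m * (m + 1))) with hL
  have hLpos : 0 < L := by
    apply mul_pos hC
    positivity
  -- limit of each term times exp(r0 * lam)
  have key : ∀ n ∈ Finset.range K,
      Tendsto (fun lam : ℝ => (-1 : ℝ) ^ n * ((K - 1).choose n : ℝ) /
        ((m + n) * (m + n + 1)) *
        Real.exp (-(lam * (m + n)) / (2 * (m + n + 1))) * Real.exp (r0 * lam))
      atTop (nhds (if n = 0 then 1 / (m * (m + 1)) else 0)) := by
    intro n hn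
    rcases Nat.eq_zero_or_pos n with h0 | hpos
    · subst h0
      simp only [if_pos rfl]
      have heq : ∀ lam : ℝ, (-1 : ℝ) ^ (0 : ℕ) * ((K - 1).choose 0 : ℝ) /
          ((m + ((0 : ℕ) : ℝ)) * (m + ((0 : ℕ) : ℝ) + 1)) *
          Real.exp (-(lam * (m + ((0 : ℕ) : ℝ))) / (2 * (m + ((0 : ℕ) : ℝ) + 1))) *
          Real.exp (r0 * lam)
          = 1 / (m * (m + 1)) := by
        intro lam
        have h1 : -(lam * (m + ((0 : ℕ) : ℝ))) / (2 * (m + ((0 : ℕ) : ℝ) + 1)) + r0 * lam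
            = 0 := by
          push_cast
          rw [hr0]
          field_simp
          ring
        rw [mul_assoc, ← Real.exp_add, h1, Real.exp_zero, mul_one]
        push_cast
        norm_num
      refine Tendsto.congr (fun lam => (heq lam).symm) tendsto_const_nhds
    · have hne : n ≠ 0 := hpos.ne'
      simp only [if_neg hne]
      set c : ℝ := (-1 : ℝ) ^ n * ((K - 1).choose n : ℝ) / ((m + n) * (m + n + 1)) with hc
      have hd : (0 : ℝ) < (m + n) / (2 * (m + n + 1)) - r0 := by
        rw [hr0]
        have hn1 : (1 : ℝ) ≤ (n : ℝ) := by exact_mod_cast hpos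
        rw [sub_pos, div_lt_div_iff₀ (by positivity) (by positivity)]
        nlinarith
      set d : ℝ := (m + n) / (2 * (m + n + 1)) - r0 with hdd
      have heq : ∀ lam : ℝ, c * Real.exp (-(lam * (m + n)) / (2 * (m + n + 1))) *
          Real.exp (r0 * lam) = c * Real.exp (-d * lam) := by
        intro lam
        rw [mul_assoc, ← Real.exp_add]
        congr 1
        rw [hdd]
        field_simp
        ring
      have hlim : Tendsto (fun lam : ℝ => c * Real.exp (-d * lam)) atTop (nhds 0) := by
        have h1 : Tendsto (fun lam : ℝ => -d * lam) atTop atBot := by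
          apply Tendsto.neg_mul_atTop (neg_neg_iff_pos.mpr hd) tendsto_const_nhds tendsto_id
        have h2 : Tendsto (fun lam : ℝ => Real.exp (-d * lam)) atTop (nhds 0) :=
          Real.tendsto_exp_atBot.comp h1
        simpa using h2.const_mul c
      exact Tendsto.congr (fun lam => (heq lam).symm) hlim
  have hsum : Tendsto (fun lam : ℝ => ∑ n ∈ Finset.range K,
      ((-1 : ℝ) ^ n * ((K - 1).choose n : ℝ) / ((m + n) * (m + n + 1)) *
        Real.exp (-(lam * (m + n)) / (2 * (m + n + 1))) * Real.exp (r0 * lam)))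
      atTop (nhds (∑ n ∈ Finset.range K, if n = 0 then 1 / (m * (m + 1)) else 0)) :=
    tendsto_finset_sum _ key
  have hsumval : (∑ n ∈ Finset.range K, if n = 0 then 1 / (m * (m + 1)) else 0)
      = 1 / (m * (m + 1)) := by
    rw [Finset.sum_ite_eq' (Finset.range K) 0 (fun _ => 1 / (m * (m + 1)))]
    simp [Finset.mem_range, hK1, Nat.pos_of_ne_zero, Nat.lt_of_lt_of_le Nat.zero_lt_one hK1]
  have hgL : Tendsto g atTop (nhds L) := by
    rw [hsumval] at hsum
    have := hsum.const_mul C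
    refine Tendsto.congr (fun lam => ?_) this
    show C * ∑ n ∈ Finset.range K, _ = f lam * Real.exp (r0 * lam)
    rw [hf]
    simp only
    rw [mul_assoc, Finset.sum_mul]
  have hlogg : Tendsto (fun lam => Real.log (g lam)) atTop (nhds (Real.log L)) :=
    hgL.log hLpos.ne'
  have hdiv : Tendsto (fun lam => Real.log (g lam) / lam) atTop (nhds 0) :=
    hlogg.div_atTop tendsto_id
  have hfinal : Tendsto (fun lam => r0 - Real.log (g lam) / lam) atTop (nhds (r0 - 0)) :=
    tendsto_const_nhds.sub hdiv
  rw [sub_zero] at hfinal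
  have hev : ∀ᶠ lam : ℝ in atTop,
      r0 - Real.log (g lam) / lam = -Real.log (f lam) / lam := by
    have hgpos : ∀ᶠ lam : ℝ in atTop, 0 < g lam := hgL.eventually (eventually_gt_nhds hLpos)
    filter_upwards [hgpos, eventually_gt_atTop (0 : ℝ)] with lam hgl hlam
    have hfe : f lam = g lam * Real.exp (-(r0 * lam)) := by
      rw [hg]
      rw [mul_assoc, ← Real.exp_add, add_neg_cancel, Real.exp_zero, mul_one]
    rw [hfe, Real.log_mul hgl.ne' (Real.exp_ne_zero _), Real.log_exp]
    field_simp
    ring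
  have : Tendsto (fun lam => -Real.log (f lam) / lam) atTop (nhds r0) :=
    Tendsto.congr' hev hfinal
  exact this
end

section
/- Let N ≥ 2 and 1 ≤ K ≤ N−1 be integers. Then α* = N(N−K+1) / (2(N−K)² + K(N−K+1)) satisfies 0 < α* ≤ 1, and α* is the unique real number α such that 2·(α/N)·(N−K)/(N−K+1) = α/N + (1−α)/(N−K). -/
/-- The optimal Stage-1 budget fraction of OTSS:
`α* = N (N - K + 1) / (2 (N - K)² + K (N - K + 1))` lies in `(0, 1]` and is the
unique real `α` balancing the Stage-1 and Stage-2 decay rates. -/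
theorem optimal_budget_fraction (N K : ℕ) (hN : 2 ≤ N) (hK1 : 1 ≤ K) (hKN : K ≤ N - 1) :
    (0 < (N : ℝ) * ((N : ℝ) - K + 1) /
        (2 * ((N : ℝ) - K) ^ 2 + K * ((N : ℝ) - K + 1))) ∧
    ((N : ℝ) * ((N : ℝ) - K + 1) /
        (2 * ((N : ℝ) - K) ^ 2 + K * ((N : ℝ) - K + 1)) ≤ 1) ∧
    (∀ α : ℝ,
      2 * (α / N) * (((N : ℝ) - K) / ((N : ℝ) - K + 1))
          = α / N + (1 - α) / ((N : ℝ) - K) ↔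
        α = (N : ℝ) * ((N : ℝ) - K + 1) /
          (2 * ((N : ℝ) - K) ^ 2 + K * ((N : ℝ) - K + 1))) := by
  have hKN' : K + 1 ≤ N := by omega
  have hk : (1:ℝ) ≤ (K:ℝ) := by exact_mod_cast hK1
  have hn : (K:ℝ) + 1 ≤ (N:ℝ) := by exact_mod_cast hKN'
  have hm : (1:ℝ) ≤ (N:ℝ) - K := by linarith
  have hm0 : (N:ℝ) - K ≠ 0 := by linarith
  have hm1 : (N:ℝ) - K + 1 ≠ 0 := by linarith
  have hN0 : (N:ℝ) ≠ 0 := by positivity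
  have hNpos : (0:ℝ) < N := by positivity
  have hD : (0:ℝ) < 2 * ((N : ℝ) - K) ^ 2 + K * ((N : ℝ) - K + 1) := by nlinarith
  refine ⟨by positivity, ?_, ?_⟩
  · rw [div_le_one hD]
    nlinarith
  · intro α
    rw [div_add_div _ _ hN0 hm0, eq_div_iff (ne_of_gt hD)]
    constructor
    · intro h
      field_simp at h
      nlinarith [h]
    · intro h
      field_simp
      nlinarith [h]
end

section
/- Let N ≥ 2 be an integer and set K* = N − round(√N). Then 1 ≤ K* ≤ N−1, and for every integer K with 1 ≤ K ≤ N−1, (N−K) / ((N−K)² + (N−K)(N−1) + N) ≤ (N−K*) / ((N−K*)² + (N−K*)(N−1) + N). -/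
set_option maxHeartbeats 1000000


open Real

/-- `K* = N - round (√N)` is the asymptotically optimal number of beam pairs to
eliminate in Stage 1 of OTSS: it is a feasible choice and maximizes the
decay-rate proxy `K ↦ (N - K) / ((N - K)² + (N - K)(N - 1) + N)`. -/
theorem optimal_elimination_number (N : ℕ) (hN : 2 ≤ N) (Kstar : ℤ)
    (hKstar : Kstar = (N : ℤ) - round (Real.sqrt N)) :
    1 ≤ Kstar ∧ Kstar ≤ (N : ℤ) - 1 ∧
    ∀ K : ℕ, 1 ≤ K → K ≤ N - 1 →
      ((N : ℝ) - K) / (((N : ℝ) - K) ^ 2 + ((N : ℝ) - K) * ((N : ℝ) - 1) + N) ≤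
        ((N : ℝ) - Kstar) /
          (((N : ℝ) - Kstar) ^ 2 + ((N : ℝ) - Kstar) * ((N : ℝ) - 1) + N) := by
  have hN2 : (2:ℝ) ≤ (N:ℝ) := by exact_mod_cast hN
  set r : ℤ := round (Real.sqrt N) with hr
  have hs0 : (0:ℝ) ≤ Real.sqrt N := Real.sqrt_nonneg _
  have hs1 : (1:ℝ) ≤ Real.sqrt N := by
    have : Real.sqrt 1 ≤ Real.sqrt N := Real.sqrt_le_sqrt (by linarith)
    simpa using this
  have hsq : Real.sqrt N ^ 2 = N := Real.sq_sqrt (by linarith)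
  have habs := abs_sub_round (Real.sqrt N)
  rw [abs_le] at habs
  have hlo : (r:ℝ) - 1/2 ≤ Real.sqrt N := by linarith [habs.2]
  have hhi : Real.sqrt N ≤ (r:ℝ) + 1/2 := by linarith [habs.1]
  have hr1 : 1 ≤ r := by
    have h0 : (0:ℝ) < (r:ℝ) := by linarith
    exact_mod_cast h0
  have hr1' : (1:ℝ) ≤ (r:ℝ) := by exact_mod_cast hr1
  -- (r-1)*r < N
  have hAr : ((r:ℝ) - 1) * r < N := by nlinarith [hsq, hlo]
  have hAZ : (r - 1) * r < (N:ℤ) := by exact_mod_cast hAr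
  -- N ≤ r*(r+1)
  have hBr : (N:ℝ) < (r:ℝ) * (r + 1) + 1 := by nlinarith [hsq, hhi]
  have hBZ : (N:ℤ) ≤ r * (r + 1) := by
    have : (N:ℤ) < r * (r + 1) + 1 := by exact_mod_cast hBr
    omega
  have hrN : r < (N:ℤ) := by
    rcases le_or_gt 2 r with h2 | h2
    · nlinarith
    · have : r = 1 := by omega
      omega
  refine ⟨by omega, by omega, ?_⟩
  intro K hK1 hK2
  have hKZ : (K:ℤ) ≤ (N:ℤ) - 1 := by omega
  have hKZ1 : (1:ℤ) ≤ (K:ℤ) := by exact_mod_cast hK1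
  set x : ℝ := (N:ℝ) - K with hx
  set y : ℝ := (N:ℝ) - Kstar with hy
  have hyr : y = (r:ℝ) := by rw [hy, hKstar]; push_cast; ring
  have hx1 : (1:ℝ) ≤ x := by
    have : ((K:ℤ):ℝ) ≤ (N:ℝ) - 1 := by exact_mod_cast hKZ
    push_cast at this ⊢
    linarith
  have hy1 : (1:ℝ) ≤ y := by rw [hyr]; exact hr1'
  have hAy : (y - 1) * y < N := by rw [hyr]; exact_mod_cast hAr
  have hBy : (N:ℝ) ≤ y * (y + 1) := by
    rw [hyr]
    exact_mod_cast hBZ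
  have hDx : (0:ℝ) < x ^ 2 + x * ((N:ℝ) - 1) + N := by nlinarith
  have hDy : (0:ℝ) < y ^ 2 + y * ((N:ℝ) - 1) + N := by nlinarith
  clear hs0 hN hKstar hr
  rw [div_le_div_iff₀ hDx hDy]
  rcases lt_trichotomy (K:ℤ) Kstar with hlt | heq | hgt
  · -- K < Kstar, so x ≥ y + 1
    have hxy : y + 1 ≤ x := by
      have h1 : (K:ℤ) + 1 ≤ Kstar := hlt
      have : ((K:ℝ)) + 1 ≤ (Kstar:ℝ) := by exact_mod_cast h1
      rw [hx, hy]; linarith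
    have h1 : (x - (y + 1)) * y ≥ 0 := mul_nonneg (by linarith) (by linarith)
    have h2 : (x - y) * (x * y - N) ≥ 0 :=
      mul_nonneg (by linarith) (by nlinarith)
    nlinarith [h2]
  · have hxy : x = y := by
      rw [hx, hy]
      have : ((K:ℝ)) = (Kstar:ℝ) := by exact_mod_cast heq
      linarith
    rw [hxy]
  · -- Kstar < K, so x ≤ y - 1
    have hxy : x ≤ y - 1 := by
      have h1 : Kstar + 1 ≤ (K:ℤ) := hgt
      have : (Kstar:ℝ) + 1 ≤ ((K:ℝ)) := by exact_mod_cast h1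
      rw [hx, hy]; linarith
    have h1 : (y - 1 - x) * y ≥ 0 := mul_nonneg (by linarith) (by linarith)
    have h2 : (y - x) * ((N:ℝ) - x * y) ≥ 0 :=
      mul_nonneg (by linarith) (by nlinarith)
    nlinarith [h2]
end

section
/- Let N ≥ 1 be an integer. Then round(√N) ≥ 1, and for every positive integer x, round(√N) + N/round(√N) ≤ x + N/x, where the divisions are taken in the reals. -/
open Real

/-- The nearest integer to `√N` minimizes `x ↦ x + N / x` over the positive
integers. -/
theorem round_sqrt_minimizes (N : ℕ) (hN : 1 ≤ N) :
    1 ≤ round (Real.sqrt N) ∧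
    ∀ x : ℕ, 0 < x →
      ((round (Real.sqrt N) : ℝ) + (N : ℝ) / (round (Real.sqrt N) : ℝ))
        ≤ (x : ℝ) + (N : ℝ) / (x : ℝ) := by
  set s : ℝ := Real.sqrt N with hsdef
  have hN1 : (1 : ℝ) ≤ (N : ℝ) := by exact_mod_cast hN
  have hs1 : (1 : ℝ) ≤ s := by
    rw [hsdef, show (1:ℝ) = Real.sqrt 1 by simp]
    exact Real.sqrt_le_sqrt hN1
  have hs2 : s * s = N := Real.mul_self_sqrt (by positivity)
  set r : ℤ := round s with hrdef
  have hround := abs_le.mp (abs_sub_round s)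
  have hlo : s - 1/2 ≤ (r : ℝ) := by linarith [hround.1]
  have hhi : (r : ℝ) ≤ s + 1/2 := by linarith [hround.2]
  have hr0 : 0 < r := by
    have h0 : (0 : ℝ) < (r : ℝ) := by linarith
    exact_mod_cast h0
  refine ⟨hr0, ?_⟩
  intro x hx
  have ha : (0 : ℝ) < (r : ℝ) := by exact_mod_cast hr0
  have hb : (0 : ℝ) < (x : ℝ) := by exact_mod_cast hx
  have key : 0 ≤ ((x : ℝ) - r) * ((r : ℝ) * x - N) := by
    rcases le_or_gt (r : ℝ) (x : ℝ) with hab | hab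
    · rcases eq_or_lt_of_le hab with heq | hlt
      · rw [← heq]; ring_nf; nlinarith
      · have hix : r < (x : ℤ) := by exact_mod_cast hlt
        have hb2 : (r : ℝ) + 1 ≤ (x : ℝ) := by
          have : ((r + 1 : ℤ) : ℝ) ≤ ((x : ℤ) : ℝ) := by exact_mod_cast hix
          push_cast at this; linarith
        have hab2 : (N : ℝ) - 1/4 ≤ (r : ℝ) * x := by nlinarith
        have hint : (N : ℝ) ≤ (r : ℝ) * x := by
          have h2 : (N : ℤ) ≤ r * (x : ℤ) := by
            have h1 : ((N : ℤ) : ℝ) - 1 < ((r * x : ℤ) : ℝ) := by push_cast; nlinarith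
            have : (N : ℤ) - 1 < r * x := by exact_mod_cast h1
            omega
          calc (N : ℝ) = ((N : ℤ) : ℝ) := by push_cast; ring
            _ ≤ ((r * x : ℤ) : ℝ) := by exact_mod_cast h2
            _ = (r : ℝ) * x := by push_cast; ring
        nlinarith
    · have hix : (x : ℤ) < r := by exact_mod_cast hab
      have hb2 : (x : ℝ) + 1 ≤ (r : ℝ) := by
        have : (((x : ℤ) + 1 : ℤ) : ℝ) ≤ (r : ℝ) := by exact_mod_cast hix
        push_cast at this; linarith
      have hble : (x : ℝ) ≤ s - 1/2 := by linarith
      have hab2 : (r : ℝ) * x ≤ (N : ℝ) := by nlinarith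
      nlinarith
  have hfin : ((r : ℝ) * r + N) * x ≤ ((x : ℝ) * x + N) * r := by nlinarith
  calc (r : ℝ) + (N : ℝ) / r = ((r : ℝ) * r + N) / r := by field_simp
    _ ≤ ((x : ℝ) * x + N) / x := by rw [div_le_div_iff₀ ha hb]; linarith
    _ = (x : ℝ) + (N : ℝ) / x := by field_simp
end

section
/- Let N ≥ 3 be an integer and set K* = N − round(√N). Then 1 ≤ K* ≤ N−2 and 1 / (2(N − K*(N−K*−1)/(2(N−K*)))) > 1/(2N). -/
open Real

/-- OTSS asymptotically outperforms exhaustive search: with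
`K* = N - round (√N)` and `N ≥ 3`, the optimal OTSS decay rate (up to a common
positive factor) strictly exceeds that of exhaustive search, `1/(2N)`. -/
theorem otss_beats_exhaustive_search (N : ℕ) (hN : 3 ≤ N) (Kstar : ℤ)
    (hKstar : Kstar = (N : ℤ) - round (Real.sqrt N)) :
    1 ≤ Kstar ∧ Kstar ≤ (N : ℤ) - 2 ∧
    1 / (2 * ((N : ℝ) - (Kstar : ℝ) * ((N : ℝ) - Kstar - 1) / (2 * ((N : ℝ) - Kstar))))
      > 1 / (2 * (N : ℝ)) := by
  have hn3 : (3:ℝ) ≤ (N:ℝ) := by exact_mod_cast hN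
  set s := Real.sqrt (N:ℝ) with hs
  have habs := abs_le.mp (abs_sub_round s)
  have hlow : s - 1/2 ≤ ((round s : ℤ) : ℝ) := by linarith [habs.2]
  have hhigh : ((round s : ℤ) : ℝ) ≤ s + 1/2 := by linarith [habs.1]
  have hs3 : Real.sqrt 3 ≤ s := Real.sqrt_le_sqrt hn3
  have h17 : (1.7:ℝ) < Real.sqrt 3 := by
    have : Real.sqrt ((1.7:ℝ)^2) < Real.sqrt 3 :=
      Real.sqrt_lt_sqrt (by positivity) (by norm_num)
    rwa [Real.sqrt_sq (by norm_num : (0:ℝ) ≤ 1.7)] at this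
  have hsltN : s < (N:ℝ) - 1/2 := by
    rw [hs, Real.sqrt_lt' (by linarith)]
    nlinarith
  -- integer bounds on round s
  have hr2 : (2:ℤ) ≤ round s := by
    have h1 : (1:ℝ) < ((round s : ℤ) : ℝ) := by linarith
    have h2 : (1:ℤ) < round s := by exact_mod_cast h1
    omega
  have hrN : round s ≤ (N:ℤ) - 1 := by
    have : ((round s : ℤ) : ℝ) < (N:ℝ) := by linarith
    have h' : round s < (N:ℤ) := by exact_mod_cast this
    omega
  have hK1 : 1 ≤ Kstar := by omega
  have hK2 : Kstar ≤ (N:ℤ) - 2 := by omega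
  refine ⟨hK1, hK2, ?_⟩
  have hk1 : (1:ℝ) ≤ (Kstar:ℝ) := by exact_mod_cast hK1
  have hk2 : (Kstar:ℝ) ≤ (N:ℝ) - 2 := by
    have := hK2
    have : ((Kstar:ℤ) : ℝ) ≤ (((N:ℤ) - 2 : ℤ) : ℝ) := by exact_mod_cast this
    push_cast at this
    linarith
  set k := (Kstar:ℝ) with hkdef
  set n := (N:ℝ) with hndef
  have hm : (2:ℝ) ≤ n - k := by linarith
  have hmpos : (0:ℝ) < 2 * (n - k) := by linarith
  have hTpos : 0 < k * (n - k - 1) / (2 * (n - k)) :=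
    div_pos (by nlinarith) hmpos
  have hTlt : k * (n - k - 1) / (2 * (n - k)) < n := by
    rw [div_lt_iff₀ hmpos]
    nlinarith
  have hA : 0 < n - k * (n - k - 1) / (2 * (n - k)) := by linarith
  have h2A : 0 < 2 * (n - k * (n - k - 1) / (2 * (n - k))) := by linarith
  have hlt : 2 * (n - k * (n - k - 1) / (2 * (n - k))) < 2 * n := by linarith
  exact one_div_lt_one_div_of_lt h2A hlt
end
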